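/- arXiv:1406.3517 — 2 statements merged into one kernel-verified Lean document; each statement's English description precedes it below -/
import Mathlib

section
/- Let n be a natural number, let s be the swap map of Fin n ⊕ Fin n interchanging inl x and inr x, and for a colored Brauer n-diagram (M, ℓ) let i(M, ℓ) := (s ∘ M ∘ s, ℓ ∘ s) (which is again a colored Brauer n-diagram). If (M, ℓ) corresponds to the tuple (a, ℓa, b, ℓb, π, w) under the bijection sending (M, ℓ) to (a, ℓa, b, ℓb, π, w) — where a is the involution of Fin n defined by a x = y if M (inl x) = inl y for some y and a x = x otherwise; b is the involution of Fin n defined by b x = y if M (inr x) = inr y for some y and b x = x otherwise; ℓa x = ℓ (inl x) if M (inl x) is a top vertex and ℓa x = 0 otherwise; ℓb x = ℓ (inr x) if M (inr x) is a bottom vertex and ℓb x = 0 otherwise; π sends each fixed point x of a to the unique y with M (inl x) = inr y; and w sends each fixed point x of a to ℓ (inl x) — then i(M, ℓ) corresponds to the tuple (b, ℓb, a, ℓa, π⁻¹, w') where w' y = -w (π⁻¹ y) for each fixed point y of b. -/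
open Sum

/-- A Brauer `n`-diagram: a fixed-point-free involution of `Fin n ⊕ Fin n`. -/
def IsBrauer {n : ℕ} (M : Fin n ⊕ Fin n → Fin n ⊕ Fin n) : Prop :=
  M ∘ M = id ∧ ∀ x, M x ≠ x

/-- A colored Brauer `n`-diagram: a Brauer diagram together with a labeling
`ℓ : Fin n ⊕ Fin n → ℤ` satisfying `ℓ (M x) = -ℓ x` for all `x`. -/
def IsColoredBrauer {n : ℕ} (M : Fin n ⊕ Fin n → Fin n ⊕ Fin n)
    (ℓ : Fin n ⊕ Fin n → ℤ) : Prop :=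
  IsBrauer M ∧ ∀ x, ℓ (M x) = -ℓ x

/-- The top involution `a`. -/
noncomputable def topInv {n : ℕ} (M : Fin n ⊕ Fin n → Fin n ⊕ Fin n) (x : Fin n) : Fin n :=
  if h : ∃ y, M (inl x) = inl y then h.choose else x

/-- The bottom involution `b`. -/
noncomputable def botInv {n : ℕ} (M : Fin n ⊕ Fin n → Fin n ⊕ Fin n) (x : Fin n) : Fin n :=
  if h : ∃ y, M (inr x) = inr y then h.choose else x

/-- The through-strand map `π`: it sends a fixed point `x` of `a` to the unique `y`
with `M (inl x) = inr y`. -/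
def thru {n : ℕ} (M : Fin n ⊕ Fin n → Fin n ⊕ Fin n) (x : Fin n) : Fin n :=
  match M (inl x) with
  | inl _ => x
  | inr y => y

/-- `ℓa x = ℓ (inl x)` if `M (inl x)` is a top vertex, and `ℓa x = 0` otherwise. -/
def topLab {n : ℕ} (M : Fin n ⊕ Fin n → Fin n ⊕ Fin n) (ℓ : Fin n ⊕ Fin n → ℤ)
    (x : Fin n) : ℤ :=
  if (M (inl x)).isLeft then ℓ (inl x) else 0

/-- `ℓb x = ℓ (inr x)` if `M (inr x)` is a bottom vertex, and `ℓb x = 0` otherwise. -/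
def botLab {n : ℕ} (M : Fin n ⊕ Fin n → Fin n ⊕ Fin n) (ℓ : Fin n ⊕ Fin n → ℤ)
    (x : Fin n) : ℤ :=
  if (M (inr x)).isRight then ℓ (inr x) else 0

/-- `w x = ℓ (inl x)` at each fixed point `x` of `a` (i.e. when `M (inl x)` is a bottom
vertex). -/
def thruLab {n : ℕ} (M : Fin n ⊕ Fin n → Fin n ⊕ Fin n) (ℓ : Fin n ⊕ Fin n → ℤ)
    (x : Fin n) : ℤ :=
  if (M (inl x)).isRight then ℓ (inl x) else 0

/-! Conjugating by `swap` exchanges top and bottom vertices, so the top data of the flipped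
diagram are the bottom data of `M` and vice versa. A through strand `M (inl x) = inr y` becomes,
by involutivity, the strand `inl y ↦ inr x` of the flipped diagram, which inverts `π`; its label
read from `inl y` is `ℓ (inr y) = ℓ (M (inl x)) = -ℓ (inl x)`, whence the sign in `w'`. -/

section

variable {n : ℕ} {M : Fin n ⊕ Fin n → Fin n ⊕ Fin n} {x y : Fin n}

lemma topInv_eq_of_apply_inl_eq_inl (h : M (inl x) = inl y) : topInv M x = y := by
  have hex : ∃ z, M (inl x) = inl z := ⟨y, h⟩
  rw [topInv, dif_pos hex]
  exact inl_injective (hex.choose_spec.symm.trans h)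

lemma topInv_eq_self_of_apply_inl_eq_inr (h : M (inl x) = inr y) : topInv M x = x := by
  rw [topInv, dif_neg]
  rintro ⟨z, hz⟩
  exact inl_ne_inr (hz.symm.trans h)

lemma botInv_eq_of_apply_inr_eq_inr (h : M (inr x) = inr y) : botInv M x = y := by
  have hex : ∃ z, M (inr x) = inr z := ⟨y, h⟩
  rw [botInv, dif_pos hex]
  exact inr_injective (hex.choose_spec.symm.trans h)

lemma botInv_eq_self_of_apply_inr_eq_inl (h : M (inr x) = inl y) : botInv M x = x := by
  rw [botInv, dif_neg]
  rintro ⟨z, hz⟩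
  exact inl_ne_inr (h.symm.trans hz)

lemma thru_eq_of_apply_inl_eq_inr (h : M (inl x) = inr y) : thru M x = y := by
  simp only [thru, h]

lemma thruLab_eq_of_apply_inl_eq_inr (ℓ : Fin n ⊕ Fin n → ℤ) (h : M (inl x) = inr y) :
    thruLab M ℓ x = ℓ (inl x) := by
  simp only [thruLab, h, isRight_inr, if_true]

lemma exists_apply_inl_eq_inr_of_topInv_eq_self (hfix : ∀ z, M z ≠ z)
    (hx : topInv M x = x) : ∃ y, M (inl x) = inr y := by
  rcases h : M (inl x) with z | y
  · rw [topInv_eq_of_apply_inl_eq_inl h] at hx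
    exact absurd (hx ▸ h) (hfix _)
  · exact ⟨y, rfl⟩

lemma exists_apply_inl_eq_inr_of_botInv_eq_self (hM : Function.Involutive M)
    (hfix : ∀ z, M z ≠ z) (hy : botInv M y = y) : ∃ x, M (inl x) = inr y := by
  rcases h : M (inr y) with x | z
  · exact ⟨x, by rw [← h, hM]⟩
  · rw [botInv_eq_of_apply_inr_eq_inr h] at hy
    exact absurd (hy ▸ h) (hfix _)

variable (M) in
lemma topInv_swap_conj : topInv (swap ∘ M ∘ swap) = botInv M := by
  funext x
  rcases h : M (inr x) with y | y
  · rw [botInv_eq_self_of_apply_inr_eq_inl h,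
      topInv_eq_self_of_apply_inl_eq_inr (y := y) (by simp [h])]
  · rw [botInv_eq_of_apply_inr_eq_inr h, topInv_eq_of_apply_inl_eq_inl (y := y) (by simp [h])]

variable (M) in
lemma botInv_swap_conj : botInv (swap ∘ M ∘ swap) = topInv M := by
  funext x
  rcases h : M (inl x) with y | y
  · rw [topInv_eq_of_apply_inl_eq_inl h, botInv_eq_of_apply_inr_eq_inr (y := y) (by simp [h])]
  · rw [topInv_eq_self_of_apply_inl_eq_inr h,
      botInv_eq_self_of_apply_inr_eq_inl (y := y) (by simp [h])]

variable (M) in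
lemma topLab_swap_conj (ℓ : Fin n ⊕ Fin n → ℤ) :
    topLab (swap ∘ M ∘ swap) (ℓ ∘ swap) = botLab M ℓ := by
  funext x
  simp [topLab, botLab]

variable (M) in
lemma botLab_swap_conj (ℓ : Fin n ⊕ Fin n → ℤ) :
    botLab (swap ∘ M ∘ swap) (ℓ ∘ swap) = topLab M ℓ := by
  funext x
  simp [topLab, botLab]

lemma thru_swap_conj_eq_of_apply_inl_eq_inr (hM : Function.Involutive M)
    (h : M (inl x) = inr y) : thru (swap ∘ M ∘ swap) y = x :=
  thru_eq_of_apply_inl_eq_inr (by simp [← h, hM (inl x)])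

lemma thruLab_swap_conj_eq_neg_of_apply_inl_eq_inr {ℓ : Fin n ⊕ Fin n → ℤ}
    (hM : Function.Involutive M) (hℓ : ∀ z, ℓ (M z) = -ℓ z) (h : M (inl x) = inr y) :
    thruLab (swap ∘ M ∘ swap) (ℓ ∘ swap) y = -thruLab M ℓ x := by
  have h' : (swap ∘ M ∘ swap) (inl y) = inr x := by simp [← h, hM (inl x)]
  rw [thruLab_eq_of_apply_inl_eq_inr _ h', thruLab_eq_of_apply_inl_eq_inr _ h, ← hℓ, h]
  rfl

lemma IsBrauer.involutive (hM : IsBrauer M) : Function.Involutive M :=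
  congrFun hM.1

lemma IsBrauer.swap_conj (hM : IsBrauer M) : IsBrauer (swap ∘ M ∘ swap) := by
  have hconj : Function.Involutive (swap ∘ M ∘ swap) := fun z => by
    simp [hM.involutive (swap z)]
  exact ⟨hconj.comp_self, fun z hz => hM.2 (swap z) (by simpa using congrArg swap hz)⟩

lemma IsColoredBrauer.swap_conj {ℓ : Fin n ⊕ Fin n → ℤ} (h : IsColoredBrauer M ℓ) :
    IsColoredBrauer (swap ∘ M ∘ swap) (ℓ ∘ swap) :=
  ⟨h.1.swap_conj, fun z => by simp [h.2]⟩

end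

/-- If the colored Brauer diagram `(M, ℓ)` corresponds to the tuple
`(a, ℓa, b, ℓb, π, w)`, then the flipped diagram
`i(M, ℓ) = (swap ∘ M ∘ swap, ℓ ∘ swap)` is again a colored Brauer diagram and
corresponds to the tuple `(b, ℓb, a, ℓa, π⁻¹, w')` where `w' y = -w (π⁻¹ y)` for
each fixed point `y` of `b`. -/
theorem stmt12 (n : ℕ) (M : Fin n ⊕ Fin n → Fin n ⊕ Fin n) (ℓ : Fin n ⊕ Fin n → ℤ)
    (hMℓ : IsColoredBrauer M ℓ) :
    IsColoredBrauer (Sum.swap ∘ M ∘ Sum.swap) (ℓ ∘ Sum.swap) ∧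
    topInv (Sum.swap ∘ M ∘ Sum.swap) = botInv M ∧
    botInv (Sum.swap ∘ M ∘ Sum.swap) = topInv M ∧
    topLab (Sum.swap ∘ M ∘ Sum.swap) (ℓ ∘ Sum.swap) = botLab M ℓ ∧
    botLab (Sum.swap ∘ M ∘ Sum.swap) (ℓ ∘ Sum.swap) = topLab M ℓ ∧
    (∀ y : Fin n, botInv M y = y →
      topInv M (thru (Sum.swap ∘ M ∘ Sum.swap) y) = thru (Sum.swap ∘ M ∘ Sum.swap) y ∧
      thru M (thru (Sum.swap ∘ M ∘ Sum.swap) y) = y) ∧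
    (∀ x : Fin n, topInv M x = x →
      thru (Sum.swap ∘ M ∘ Sum.swap) (thru M x) = x) ∧
    (∀ y : Fin n, botInv M y = y →
      thruLab (Sum.swap ∘ M ∘ Sum.swap) (ℓ ∘ Sum.swap) y =
        -thruLab M ℓ (thru (Sum.swap ∘ M ∘ Sum.swap) y)) := by
  have hM := hMℓ.1.involutive
  have hfix := hMℓ.1.2
  refine ⟨hMℓ.swap_conj, topInv_swap_conj M, botInv_swap_conj M, topLab_swap_conj M ℓ,
    botLab_swap_conj M ℓ, fun y hy => ?_, fun x hx => ?_, fun y hy => ?_⟩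
  · obtain ⟨x, hx⟩ := exists_apply_inl_eq_inr_of_botInv_eq_self hM hfix hy
    rw [thru_swap_conj_eq_of_apply_inl_eq_inr hM hx]
    exact ⟨topInv_eq_self_of_apply_inl_eq_inr hx, thru_eq_of_apply_inl_eq_inr hx⟩
  · obtain ⟨y, hy⟩ := exists_apply_inl_eq_inr_of_topInv_eq_self hfix hx
    rw [thru_eq_of_apply_inl_eq_inr hy, thru_swap_conj_eq_of_apply_inl_eq_inr hM hy]
  · obtain ⟨x, hx⟩ := exists_apply_inl_eq_inr_of_botInv_eq_self hM hfix hy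
    rw [thru_swap_conj_eq_of_apply_inl_eq_inr hM hx]
    exact thruLab_swap_conj_eq_neg_of_apply_inl_eq_inr hM hMℓ.2 hx
end

section
/- Suppose in addition that ℓ₁ : A ⊕ B → ℤ satisfies ℓ₁ (f x) = -ℓ₁ x for all x, and ℓ₂ : B ⊕ C → ℤ satisfies ℓ₂ (g y) = -ℓ₂ y for all y. For x : A ⊕ C, let v₀, v₁, …, v_r be the unique sequence of pairwise distinct vertices of A ⊕ B ⊕ C with v₀ the image of x, consecutive vertices adjacent in G, all intermediate vertices in the image of B, and v_r the image of (f * g) x; and define λ(v_i, v_{i+1}) = ℓ₁ u if v_i is the image of u and v_{i+1} the image of f u for some u : A ⊕ B, and otherwise λ(v_i, v_{i+1}) = ℓ₂ u where v_i is the image of u and v_{i+1} the image of g u for some u : B ⊕ C. Then the function ℓ : A ⊕ C → ℤ defined by ℓ x = Σ_{i=0}^{r-1} λ(v_i, v_{i+1}) is well defined and satisfies ℓ ((f * g) x) = -ℓ x for all x; that is, (f * g, ℓ) is again a labeled matching. -/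
open Sum

variable {A B C : Type*}

/-- The natural embedding of `A ⊕ B` into `A ⊕ B ⊕ C`. -/
def embAB : A ⊕ B → A ⊕ B ⊕ C
  | inl a => inl a
  | inr b => inr (inl b)

/-- The natural embedding of `B ⊕ C` into `A ⊕ B ⊕ C`. -/
def embBC : B ⊕ C → A ⊕ B ⊕ C
  | inl b => inr (inl b)
  | inr c => inr (inr c)

/-- The natural embedding of `A ⊕ C` into `A ⊕ B ⊕ C`. -/
def embAC : A ⊕ C → A ⊕ B ⊕ C
  | inl a => inl a
  | inr c => inr (inr c)

/-- The simple graph on `A ⊕ B ⊕ C` whose edges join (the images of) `x` and `f x`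
for each `x : A ⊕ B`, and (the images of) `y` and `g y` for each `y : B ⊕ C`. -/
def matchGraph (f : A ⊕ B → A ⊕ B) (g : B ⊕ C → B ⊕ C) :
    SimpleGraph (A ⊕ B ⊕ C) :=
  SimpleGraph.fromRel fun u v =>
    (∃ x : A ⊕ B, u = embAB x ∧ v = embAB (f x)) ∨
    (∃ y : B ⊕ C, u = embBC y ∧ v = embBC (g y))

/-- `m` is the composite matching `f * g`: the (unique) fixed-point-free involution of
`A ⊕ C` such that `x` and `m x` always lie in the same connected component of `G`. -/
def IsComposite (f : A ⊕ B → A ⊕ B) (g : B ⊕ C → B ⊕ C)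
    (m : A ⊕ C → A ⊕ C) : Prop :=
  m ∘ m = id ∧ (∀ x, m x ≠ x) ∧
    ∀ x : A ⊕ C, (matchGraph f g).Reachable (embAC x) (embAC (m x))

open Classical in
/-- The label `λ(u, v)` of an edge of `G`: it equals `ℓ₁ w` if `u` is the image of `w`
and `v` is the image of `f w` for some `w : A ⊕ B`, and otherwise `ℓ₂ w` where `u` is
the image of `w` and `v` is the image of `g w` for some `w : B ⊕ C`. -/
noncomputable def edgeLabel (f : A ⊕ B → A ⊕ B) (g : B ⊕ C → B ⊕ C)
    (ℓ₁ : A ⊕ B → ℤ) (ℓ₂ : B ⊕ C → ℤ) (u v : A ⊕ B ⊕ C) : ℤ :=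
  if h : ∃ w : A ⊕ B, u = embAB w ∧ v = embAB (f w) then ℓ₁ h.choose
  else if h' : ∃ w : B ⊕ C, u = embBC w ∧ v = embBC (g w) then ℓ₂ h'.choose
  else 0

/-- `v = (v 0, …, v r)` is the sequence of pairwise distinct vertices of `A ⊕ B ⊕ C`
from the image of `x` to the image of `y`, with consecutive vertices adjacent in `G`
and all intermediate vertices in the image of `B`. -/
def IsPathSeqTo (f : A ⊕ B → A ⊕ B) (g : B ⊕ C → B ⊕ C) (x y : A ⊕ C)
    (r : ℕ) (v : Fin (r + 1) → A ⊕ B ⊕ C) : Prop :=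
  1 ≤ r ∧ Function.Injective v ∧ v 0 = embAC x ∧
    (∀ i : Fin r, (matchGraph f g).Adj (v i.castSucc) (v i.succ)) ∧
    (∀ i : Fin (r + 1), i ≠ 0 → i ≠ Fin.last r → ∃ b : B, v i = inr (inl b)) ∧
    v (Fin.last r) = embAC y


lemma embAB_inj : Function.Injective (embAB : A ⊕ B → A ⊕ B ⊕ C) := by
  intro x y h; cases x <;> cases y <;> simp_all [embAB]

lemma embBC_inj : Function.Injective (embBC : B ⊕ C → A ⊕ B ⊕ C) := by
  intro x y h; cases x <;> cases y <;> simp_all [embBC]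

lemma embAC_inj : Function.Injective (embAC : A ⊕ C → A ⊕ B ⊕ C) := by
  intro x y h; cases x <;> cases y <;> simp_all [embAC]

lemma embAC_ne_B (z : A ⊕ C) (b : B) : embAC z ≠ (inr (inl b) : A ⊕ B ⊕ C) := by
  cases z <;> simp [embAC]

lemma vertex_cases (u : A ⊕ B ⊕ C) : (∃ b : B, u = inr (inl b)) ∨ ∃ z : A ⊕ C, u = embAC z := by
  rcases u with a | b | c
  · exact Or.inr ⟨inl a, rfl⟩
  · exact Or.inl ⟨b, rfl⟩
  · exact Or.inr ⟨inr c, rfl⟩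

section
variable {f : A ⊕ B → A ⊕ B} {g : B ⊕ C → B ⊕ C}

lemma adj_iff (hf : f ∘ f = id) (hf' : ∀ x, f x ≠ x) (hg : g ∘ g = id) (hg' : ∀ y, g y ≠ y)
    {u v : A ⊕ B ⊕ C} :
    (matchGraph f g).Adj u v ↔
      (∃ w, u = embAB w ∧ v = embAB (f w)) ∨ (∃ w, u = embBC w ∧ v = embBC (g w)) := by
  have hff : ∀ w, f (f w) = w := fun w => congrFun hf w
  have hgg : ∀ w, g (g w) = w := fun w => congrFun hg w
  rw [matchGraph, SimpleGraph.fromRel_adj]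
  constructor
  · rintro ⟨hne, h | h⟩
    · exact h
    · rcases h with ⟨w, h1, h2⟩ | ⟨w, h1, h2⟩
      · exact Or.inl ⟨f w, h2, by rw [hff]; exact h1⟩
      · exact Or.inr ⟨g w, h2, by rw [hgg]; exact h1⟩
  · intro h
    refine ⟨?_, Or.inl h⟩
    rcases h with ⟨w, rfl, h2⟩ | ⟨w, rfl, h2⟩
    · rw [h2]; exact fun hh => hf' w (embAB_inj hh.symm)
    · rw [h2]; exact fun hh => hg' w (embBC_inj hh.symm)

lemma adj_two (hf : f ∘ f = id) (hf' : ∀ x, f x ≠ x) (hg : g ∘ g = id) (hg' : ∀ y, g y ≠ y)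
    {u v₁ v₂ v₃ : A ⊕ B ⊕ C} (h1 : (matchGraph f g).Adj u v₁)
    (h2 : (matchGraph f g).Adj u v₂) (h3 : (matchGraph f g).Adj u v₃) :
    v₁ = v₂ ∨ v₁ = v₃ ∨ v₂ = v₃ := by
  rw [adj_iff hf hf' hg hg'] at h1 h2 h3
  rcases h1 with ⟨w1, e1, e1'⟩ | ⟨w1, e1, e1'⟩ <;>
    rcases h2 with ⟨w2, e2, e2'⟩ | ⟨w2, e2, e2'⟩ <;>
    rcases h3 with ⟨w3, e3, e3'⟩ | ⟨w3, e3, e3'⟩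
  · left; rw [e1', e2', embAB_inj (e1.symm.trans e2)]
  · left; rw [e1', e2', embAB_inj (e1.symm.trans e2)]
  · right; left; rw [e1', e3', embAB_inj (e1.symm.trans e3)]
  · right; right; rw [e2', e3', embBC_inj (e2.symm.trans e3)]
  · right; right; rw [e2', e3', embAB_inj (e2.symm.trans e3)]
  · right; left; rw [e1', e3', embBC_inj (e1.symm.trans e3)]
  · left; rw [e1', e2', embBC_inj (e1.symm.trans e2)]
  · left; rw [e1', e2', embBC_inj (e1.symm.trans e2)]

lemma adj_embAC (hf : f ∘ f = id) (hf' : ∀ x, f x ≠ x) (hg : g ∘ g = id) (hg' : ∀ y, g y ≠ y)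
    {x : A ⊕ C} {v₁ v₂ : A ⊕ B ⊕ C} (h1 : (matchGraph f g).Adj (embAC x) v₁)
    (h2 : (matchGraph f g).Adj (embAC x) v₂) : v₁ = v₂ := by
  rw [adj_iff hf hf' hg hg'] at h1 h2
  rcases x with a | c
  · have k : ∀ {v : A ⊕ B ⊕ C}, ((∃ w, embAC (inl a : A ⊕ C) = embAB w ∧ v = embAB (f w)) ∨
        (∃ w, embAC (inl a : A ⊕ C) = embBC w ∧ v = embBC (g w))) → v = embAB (f (inl a)) := by
      rintro v (⟨w, e, rfl⟩ | ⟨w, e, rfl⟩)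
      · have : (inl a : A ⊕ B) = w := embAB_inj e
        rw [← this]
      · exfalso; cases w <;> simp [embAC, embBC] at e
    rw [k h1, k h2]
  · have k : ∀ {v : A ⊕ B ⊕ C}, ((∃ w, embAC (inr c : A ⊕ C) = embAB w ∧ v = embAB (f w)) ∨
        (∃ w, embAC (inr c : A ⊕ C) = embBC w ∧ v = embBC (g w))) → v = embBC (g (inr c)) := by
      rintro v (⟨w, e, rfl⟩ | ⟨w, e, rfl⟩)
      · exfalso; cases w <;> simp [embAC, embAB] at e
      · have : (inr c : B ⊕ C) = w := embBC_inj e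
        rw [← this]
    rw [k h1, k h2]

lemma getVert_mem_support {V : Type*} {G : SimpleGraph V} {u w : V} (p : G.Walk u w) (i : ℕ) :
    p.getVert i ∈ p.support := by
  induction p generalizing i with
  | nil => simp [SimpleGraph.Walk.getVert]
  | cons h q ih =>
    cases i with
    | zero => simp [SimpleGraph.Walk.getVert]
    | succ n => rw [SimpleGraph.Walk.getVert_cons_succ]; simp [ih n]

lemma getVert_injOn' {V : Type*} {G : SimpleGraph V} {u w : V} (p : G.Walk u w) (hp : p.IsPath) :
    ∀ i, i ≤ p.length → ∀ j, j ≤ p.length → p.getVert i = p.getVert j → i = j := by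
  induction p with
  | nil => intro i hi j hj _; simp at hi hj; omega
  | cons h q ih =>
    rw [SimpleGraph.Walk.cons_isPath_iff] at hp
    intro i hi j hj hij
    match i, j with
    | 0, 0 => rfl
    | 0, j+1 =>
      exfalso; apply hp.2
      rw [show ((q.cons h).getVert 0) = _ from SimpleGraph.Walk.getVert_zero _,
        SimpleGraph.Walk.getVert_cons_succ] at hij
      rw [hij]; exact getVert_mem_support q j
    | i+1, 0 =>
      exfalso; apply hp.2
      rw [show ((q.cons h).getVert 0) = _ from SimpleGraph.Walk.getVert_zero _,
        SimpleGraph.Walk.getVert_cons_succ] at hij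
      rw [← hij]; exact getVert_mem_support q i
    | i+1, j+1 =>
      rw [SimpleGraph.Walk.getVert_cons_succ, SimpleGraph.Walk.getVert_cons_succ] at hij
      simp only [SimpleGraph.Walk.length_cons] at hi hj
      have := ih hp.1 i (by omega) j (by omega) hij
      omega

lemma pathSeq_exists (hf : f ∘ f = id) (hf' : ∀ x, f x ≠ x) (hg : g ∘ g = id)
    (hg' : ∀ y, g y ≠ y) {x y : A ⊕ C} (hxy : x ≠ y)
    (hreach : (matchGraph f g).Reachable (embAC x) (embAC y)) :
    ∃ r v, IsPathSeqTo f g x y r v := by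
  classical
  obtain ⟨w⟩ := hreach
  obtain ⟨p, hp⟩ := w.toPath
  set r := p.length with hr
  have hr1 : 1 ≤ r := by
    rcases Nat.eq_zero_or_pos r with h0 | h
    · exact absurd (embAC_inj (p.eq_of_length_eq_zero h0)) hxy
    · omega
  refine ⟨r, fun i => p.getVert i.val, hr1, ?_, ?_, ?_, ?_, ?_⟩
  · intro i j hij
    exact Fin.ext (getVert_injOn' p hp i.val (by omega) j.val (by omega) hij)
  · exact p.getVert_zero
  · intro i
    exact p.adj_getVert_succ i.isLt
  · intro i hi0 hil
    have h1 : 0 < i.val := by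
      rcases Nat.eq_zero_or_pos i.val with h | h
      · exact absurd (Fin.ext h) hi0
      · exact h
    have h2 : i.val < r := by
      rcases Nat.lt_or_ge i.val r with h | h
      · exact h
      · exact absurd (Fin.ext (by simp; omega)) hil
    rcases vertex_cases (p.getVert i.val) with ⟨b, hb⟩ | ⟨z, hz⟩
    · exact ⟨b, hb⟩
    · exfalso
      have a1 : (matchGraph f g).Adj (p.getVert i.val) (p.getVert (i.val + 1)) :=
        p.adj_getVert_succ h2
      have a2 : (matchGraph f g).Adj (p.getVert i.val) (p.getVert (i.val - 1)) := by
        have := p.adj_getVert_succ (i := i.val - 1) (by omega)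
        rw [show i.val - 1 + 1 = i.val by omega] at this
        exact this.symm
      rw [hz] at a1 a2
      have := adj_embAC hf hf' hg hg' a1 a2
      have := getVert_injOn' p hp (i.val + 1) (by omega) (i.val - 1) (by omega) this
      omega
  · exact p.getVert_length

lemma pathSeq_unique (hf : f ∘ f = id) (hf' : ∀ x, f x ≠ x) (hg : g ∘ g = id)
    (hg' : ∀ y, g y ≠ y) {x y : A ⊕ C} {r r' : ℕ}
    {v : Fin (r + 1) → A ⊕ B ⊕ C} {v' : Fin (r' + 1) → A ⊕ B ⊕ C}
    (h : IsPathSeqTo f g x y r v) (h' : IsPathSeqTo f g x y r' v') :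
    r = r' ∧ ∀ (i : ℕ) (hi : i < r + 1) (hi' : i < r' + 1), v ⟨i, hi⟩ = v' ⟨i, hi'⟩ := by
  obtain ⟨hr1, hinj, h0, hadj, hmid, hlast⟩ := h
  obtain ⟨hr1', hinj', h0', hadj', hmid', hlast'⟩ := h'
  have key : ∀ i (hi : i ≤ r) (hi' : i ≤ r'), v ⟨i, by omega⟩ = v' ⟨i, by omega⟩ := by
    intro i
    induction i using Nat.strong_induction_on with
    | _ i ih =>
      intro hi hi'
      match i with
      | 0 =>
        have e0 : v ⟨0, by omega⟩ = embAC x := h0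
        have e0' : v' ⟨0, by omega⟩ = embAC x := h0'
        rw [e0, e0']
      | 1 =>
        have a1 : (matchGraph f g).Adj (embAC x) (v ⟨1, by omega⟩) := by
          have := hadj ⟨0, by omega⟩
          rwa [show (⟨0, by omega⟩ : Fin r).castSucc = (0 : Fin (r+1)) from rfl, h0] at this
        have a2 : (matchGraph f g).Adj (embAC x) (v' ⟨1, by omega⟩) := by
          have := hadj' ⟨0, by omega⟩
          rwa [show (⟨0, by omega⟩ : Fin r').castSucc = (0 : Fin (r'+1)) from rfl, h0'] at this
        exact adj_embAC hf hf' hg hg' a1 a2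
      | k+2 =>
        have e1 : v ⟨k+1, by omega⟩ = v' ⟨k+1, by omega⟩ := ih (k+1) (by omega) (by omega) (by omega)
        have e0 : v ⟨k, by omega⟩ = v' ⟨k, by omega⟩ := ih k (by omega) (by omega) (by omega)
        have a1 : (matchGraph f g).Adj (v ⟨k+1, by omega⟩) (v ⟨k+2, by omega⟩) :=
          hadj ⟨k+1, by omega⟩
        have a2 : (matchGraph f g).Adj (v ⟨k+1, by omega⟩) (v ⟨k, by omega⟩) :=
          (hadj ⟨k, by omega⟩).symm
        have a3 : (matchGraph f g).Adj (v ⟨k+1, by omega⟩) (v' ⟨k+2, by omega⟩) := by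
          rw [e1]; exact hadj' ⟨k+1, by omega⟩
        rcases adj_two hf hf' hg hg' a2 a1 a3 with hh | hh | hh
        · exact absurd (hinj hh) (by simp [Fin.ext_iff])
        · exfalso
          rw [e0] at hh
          exact absurd (hinj' hh) (by simp [Fin.ext_iff])
        · exact hh
  have hrr : r = r' := by
    by_contra hne
    rcases Nat.lt_or_ge r r' with hlt | hge
    · have e : v' ⟨r, by omega⟩ = embAC y := by
        rw [← key r (by omega) (by omega)]
        have : (⟨r, by omega⟩ : Fin (r+1)) = Fin.last r := rfl
        rw [this, hlast]
      obtain ⟨b, hb⟩ := hmid' ⟨r, by omega⟩ (by simp [Fin.ext_iff]; omega) (by simp [Fin.ext_iff]; omega)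
      rw [e] at hb
      exact embAC_ne_B y b hb
    · have hlt : r' < r := by omega
      have e : v ⟨r', by omega⟩ = embAC y := by
        rw [key r' (by omega) (by omega)]
        have : (⟨r', by omega⟩ : Fin (r'+1)) = Fin.last r' := rfl
        rw [this, hlast']
      obtain ⟨b, hb⟩ := hmid ⟨r', by omega⟩ (by simp [Fin.ext_iff]; omega) (by simp [Fin.ext_iff]; omega)
      rw [e] at hb
      exact embAC_ne_B y b hb
  exact ⟨hrr, fun i hi hi' => key i (by omega) (by omega)⟩

lemma pathSeq_rev {x y : A ⊕ C} {r : ℕ} {v : Fin (r + 1) → A ⊕ B ⊕ C}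
    (h : IsPathSeqTo f g x y r v) : IsPathSeqTo f g y x r (v ∘ Fin.rev) := by
  obtain ⟨hr1, hinj, h0, hadj, hmid, hlast⟩ := h
  refine ⟨hr1, hinj.comp Fin.rev_injective, ?_, ?_, ?_, ?_⟩
  · show v (Fin.rev 0) = embAC y
    rw [Fin.rev_zero, hlast]
  · intro i
    show (matchGraph f g).Adj (v i.castSucc.rev) (v i.succ.rev)
    rw [Fin.rev_castSucc, Fin.rev_succ]
    exact (hadj i.rev).symm
  · intro i hi0 hil
    apply hmid i.rev
    · intro hh
      apply hil
      rw [← Fin.rev_rev i, hh, Fin.rev_zero]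
    · intro hh
      apply hi0
      rw [← Fin.rev_rev i, hh, Fin.rev_last]
  · show v (Fin.rev (Fin.last r)) = embAC x
    rw [Fin.rev_last, h0]

end

lemma edgeLabel_antisymm {f : A ⊕ B → A ⊕ B} {g : B ⊕ C → B ⊕ C}
    (hf : f ∘ f = id) (hg : g ∘ g = id)
    {ℓ₁ : A ⊕ B → ℤ} (hℓ₁ : ∀ x, ℓ₁ (f x) = -ℓ₁ x)
    {ℓ₂ : B ⊕ C → ℤ} (hℓ₂ : ∀ y, ℓ₂ (g y) = -ℓ₂ y) (u v : A ⊕ B ⊕ C) :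
    edgeLabel f g ℓ₁ ℓ₂ v u = - edgeLabel f g ℓ₁ ℓ₂ u v := by
  have hff : ∀ w, f (f w) = w := fun w => congrFun hf w
  have hgg : ∀ w, g (g w) = w := fun w => congrFun hg w
  unfold edgeLabel
  by_cases h : ∃ w : A ⊕ B, u = embAB w ∧ v = embAB (f w)
  · have h' : ∃ w : A ⊕ B, v = embAB w ∧ u = embAB (f w) :=
      ⟨f h.choose, h.choose_spec.2, by rw [hff]; exact h.choose_spec.1⟩
    rw [dif_pos h, dif_pos h']
    have e1 : h'.choose = f h.choose := embAB_inj (h'.choose_spec.1.symm.trans h.choose_spec.2)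
    rw [e1, hℓ₁]
  · have h' : ¬ ∃ w : A ⊕ B, v = embAB w ∧ u = embAB (f w) := by
      rintro ⟨w, rfl, rfl⟩; exact h ⟨f w, rfl, by rw [hff]⟩
    rw [dif_neg h, dif_neg h']
    by_cases h2 : ∃ w : B ⊕ C, u = embBC w ∧ v = embBC (g w)
    · have h2' : ∃ w : B ⊕ C, v = embBC w ∧ u = embBC (g w) :=
        ⟨g h2.choose, h2.choose_spec.2, by rw [hgg]; exact h2.choose_spec.1⟩
      rw [dif_pos h2, dif_pos h2']
      have e1 : h2'.choose = g h2.choose :=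
        embBC_inj (h2'.choose_spec.1.symm.trans h2.choose_spec.2)
      rw [e1, hℓ₂]
    · have h2' : ¬ ∃ w : B ⊕ C, v = embBC w ∧ u = embBC (g w) := by
        rintro ⟨w, rfl, rfl⟩; exact h2 ⟨g w, rfl, by rw [hgg]⟩
      rw [dif_neg h2, dif_neg h2']; ring

/-- Given labelings `ℓ₁` of `f` and `ℓ₂` of `g`, the function `ℓ : A ⊕ C → ℤ`, sending
`x` to the sum `Σ_{i<r} λ(v_i, v_{i+1})` of the edge labels along the unique sequence
`v₀, …, v_r` from the image of `x` to the image of `(f * g) x`, is well defined and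
satisfies `ℓ ((f * g) x) = -ℓ x` for all `x`; that is, `(f * g, ℓ)` is again a labeled
matching. -/
theorem stmt14 [Fintype A] [Fintype B] [Fintype C]
    (f : A ⊕ B → A ⊕ B) (hf : f ∘ f = id) (hf' : ∀ x, f x ≠ x)
    (g : B ⊕ C → B ⊕ C) (hg : g ∘ g = id) (hg' : ∀ y, g y ≠ y)
    (m : A ⊕ C → A ⊕ C) (hm : IsComposite f g m)
    (ℓ₁ : A ⊕ B → ℤ) (hℓ₁ : ∀ x, ℓ₁ (f x) = -ℓ₁ x)
    (ℓ₂ : B ⊕ C → ℤ) (hℓ₂ : ∀ y, ℓ₂ (g y) = -ℓ₂ y) :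
    ∃ ℓ : A ⊕ C → ℤ,
      (∀ x : A ⊕ C, ∃ (r : ℕ) (v : Fin (r + 1) → A ⊕ B ⊕ C),
        IsPathSeqTo f g x (m x) r v ∧
        ℓ x = ∑ i : Fin r, edgeLabel f g ℓ₁ ℓ₂ (v i.castSucc) (v i.succ)) ∧
      (∀ (x : A ⊕ C) (r : ℕ) (v : Fin (r + 1) → A ⊕ B ⊕ C),
        IsPathSeqTo f g x (m x) r v →
        ℓ x = ∑ i : Fin r, edgeLabel f g ℓ₁ ℓ₂ (v i.castSucc) (v i.succ)) ∧
      ∀ x : A ⊕ C, ℓ (m x) = -ℓ x := by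
  obtain ⟨hm2, hm1, hm3⟩ := hm
  have hmm : ∀ z, m (m z) = z := fun z => congrFun hm2 z
  have exist : ∀ z : A ⊕ C, ∃ r v, IsPathSeqTo f g z (m z) r v :=
    fun z => pathSeq_exists hf hf' hg hg' (Ne.symm (hm1 z)) (hm3 z)
  choose r v hv using exist
  set ℓ : A ⊕ C → ℤ :=
    fun z => ∑ i : Fin (r z), edgeLabel f g ℓ₁ ℓ₂ ((v z) i.castSucc) ((v z) i.succ) with hℓ
  have wd : ∀ (z : A ⊕ C) (r' : ℕ) (v' : Fin (r' + 1) → A ⊕ B ⊕ C),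
      IsPathSeqTo f g z (m z) r' v' →
      ℓ z = ∑ i : Fin r', edgeLabel f g ℓ₁ ℓ₂ (v' i.castSucc) (v' i.succ) := by
    intro z r' v' h'
    obtain ⟨hrr, hvv⟩ := pathSeq_unique hf hf' hg hg' (hv z) h'
    subst hrr
    apply Finset.sum_congr rfl
    intro i _
    congr 1
    · exact hvv i.castSucc.val i.castSucc.isLt i.castSucc.isLt
    · exact hvv i.succ.val i.succ.isLt i.succ.isLt
  refine ⟨ℓ, fun z => ⟨r z, v z, hv z, rfl⟩, wd, ?_⟩
  intro z
  have hrev' : IsPathSeqTo f g (m z) (m (m z)) (r z) (v z ∘ Fin.rev) := by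
    rw [hmm z]; exact pathSeq_rev (hv z)
  rw [wd (m z) (r z) (v z ∘ Fin.rev) hrev']
  have step : ∀ i : Fin (r z),
      edgeLabel f g ℓ₁ ℓ₂ ((v z ∘ Fin.rev) i.castSucc) ((v z ∘ Fin.rev) i.succ)
      = - edgeLabel f g ℓ₁ ℓ₂ ((v z) i.rev.castSucc) ((v z) i.rev.succ) := by
    intro i
    show edgeLabel f g ℓ₁ ℓ₂ (v z i.castSucc.rev) (v z i.succ.rev) = _
    rw [Fin.rev_castSucc, Fin.rev_succ]
    exact edgeLabel_antisymm hf hg hℓ₁ hℓ₂ _ _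
  rw [Finset.sum_congr rfl (fun i _ => step i), Finset.sum_neg_distrib]
  congr 1
  exact Fintype.sum_bijective Fin.rev Fin.rev_involutive.bijective _ _ (fun i => rfl)
end
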